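/- arXiv:1810.07283 — 6 statements merged into one kernel-verified Lean document; each statement's English description precedes it below -/
import Mathlib

section
/- Let k ≥ 2, ε > 0, 1 ≤ d ≤ k−1 and n ≥ 1. For the scheme Q = Q_{k,ε,d} and the empirical estimator p̂, the expected ℓ_2^2 estimation loss E_{Y^n ~ (pQ)^n} Σ_{i=1}^k (p̂_i(Y^n) − p_i)^2 over p ∈ Δ_k is maximized at the uniform distribution p_U = (1/k,…,1/k), and its maximum value equals ((k−1)^2/(n k (e^ε−1)^2)) · (d e^ε + k − d)^2/(d(k−d)). -/
open MeasureTheory ProbabilityTheory Filter Real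
open scoped ENNReal NNReal

noncomputable section

/-- The probability simplex Δ_k ⊆ ℝ^k. -/
def simplex (k : ℕ) : Set (Fin k → ℝ) :=
  {p | (∀ i, 0 ≤ p i) ∧ ∑ i, p i = 1}

/-- ε-local differential privacy for a Markov kernel from `Fin k` to `Y`. -/
def IsPrivate {Y : Type} [MeasurableSpace Y] {k : ℕ} (ε : ℝ) (Q : Kernel (Fin k) Y) : Prop :=
  IsMarkovKernel Q ∧
    ∀ S : Set Y, MeasurableSet S → ∀ x x' : Fin k,
      Q x S ≤ ENNReal.ofReal (Real.exp ε) * Q x' S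

/-- The marginal distribution m = pQ of a privatized sample. -/
def marginal {Y : Type} [MeasurableSpace Y] {k : ℕ} (Q : Kernel (Fin k) Y)
    (p : Fin k → ℝ) : Measure Y :=
  ∑ i, ENNReal.ofReal (p i) • Q i

/-- Worst-case ℓ_u^u risk of the mechanism `Q` with estimator `est` from `n` samples. -/
def risk {Y : Type} [MeasurableSpace Y] (k n : ℕ) (u : ℝ) (Q : Kernel (Fin k) Y)
    (est : (Fin n → Y) → Fin k → ℝ) : ℝ≥0∞ :=
  ⨆ p ∈ simplex k,
    ∫⁻ y, ENNReal.ofReal (∑ i, |est y i - p i| ^ u)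
      ∂(Measure.pi fun _ : Fin n => marginal Q p)

/-- Minimax ℓ_u^u risk of the mechanism `Q` from `n` samples. -/
def minimaxRisk {Y : Type} [MeasurableSpace Y] (k n : ℕ) (u : ℝ) (Q : Kernel (Fin k) Y) : ℝ≥0∞ :=
  ⨅ (est : (Fin n → Y) → Fin k → ℝ) (_ : Measurable est), risk k n u Q est

/-- Output alphabet Y_{k,d} : subsets of {1,…,k} of size d. -/
def Out (k d : ℕ) : Type := {S : Finset (Fin k) // S.card = d}

instance (k d : ℕ) : Fintype (Out k d) := Subtype.fintype _
instance (k d : ℕ) : MeasurableSpace (Out k d) := ⊤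
instance (k d : ℕ) : MeasurableSingletonClass (Out k d) := ⟨fun _ => trivial⟩
instance (k d : ℕ) : DecidableEq (Out k d) := Subtype.instDecidableEq

/-- Q_{k,ε,d}(y|i). -/
def schemeP (k : ℕ) (ε : ℝ) (d : ℕ) (i : Fin k) (y : Out k d) : ℝ :=
  (if i ∈ y.1 then Real.exp ε else 1) /
    ((k-1).choose (d-1) * Real.exp ε + (k-1).choose d)

/-- The scheme Q_{k,ε,d} as a Markov kernel. -/
def schemeKernel (k : ℕ) (ε : ℝ) (d : ℕ) : Kernel (Fin k) (Out k d) :=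
  Kernel.ofFunOfCountable fun i =>
    ∑ y : Out k d, ENNReal.ofReal (schemeP k ε d i y) • Measure.dirac y

/-- Constant A of the empirical estimator. -/
def Aconst (k d : ℕ) (ε : ℝ) : ℝ :=
  (((k:ℝ)-1) * Real.exp ε + ((k:ℝ)-1)*((k:ℝ)-d)/d) / (((k:ℝ)-d)*(Real.exp ε - 1))

/-- Constant B of the empirical estimator. -/
def Bconst (k d : ℕ) (ε : ℝ) : ℝ :=
  (((d:ℝ)-1) * Real.exp ε + ((k:ℝ)-d)) / (((k:ℝ)-d)*(Real.exp ε - 1))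

/-- t_i(y^n): the number of privatized samples whose i-th coordinate is 1. -/
def tcount {k d n : ℕ} (i : Fin k) (y : Fin n → Out k d) : ℕ :=
  (Finset.univ.filter fun j => i ∈ (y j).1).card

/-- The empirical estimator p̂ under Q_{k,ε,d}. -/
def empEst (k d n : ℕ) (ε : ℝ) (y : Fin n → Out k d) (i : Fin k) : ℝ :=
  Aconst k d ε * ((tcount i y : ℝ) / n) - Bconst k d ε

/-- Marginal probability (pQ_{k,ε,d})(y). -/
def margP (k : ℕ) (ε : ℝ) (d : ℕ) (p : Fin k → ℝ) (y : Out k d) : ℝ :=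
  ∑ i, p i * schemeP k ε d i y

/-- Membership in D_{ε,E}: a finite-output ε-LDP scheme, given by the matrix
`q j v = Q(j|v)`, whose conditional probability ratios take only values 1 and e^ε. -/
def memDEE (k L : ℕ) (ε : ℝ) (q : Fin L → Fin k → ℝ) : Prop :=
  (∀ j v, 0 ≤ q j v) ∧ (∀ v, ∑ j, q j v = 1) ∧
  (∀ j v v', q j v ≤ Real.exp ε * q j v') ∧
  (∀ j v, q j v / (⨅ v', q j v') ∈ ({1, Real.exp ε} : Set ℝ))

/-- q_j = (1/k) Σ_v q_{jv}. -/
def qrow {k L : ℕ} (q : Fin L → Fin k → ℝ) (j : Fin L) : ℝ :=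
  (1/(k:ℝ)) * ∑ v, q j v

/-- A finite-output scheme (matrix) as a Markov kernel. -/
def matKernel (k L : ℕ) (q : Fin L → Fin k → ℝ) : Kernel (Fin k) (Fin L) :=
  Kernel.ofFunOfCountable fun v =>
    ∑ j, ENNReal.ofReal (q j v) • Measure.dirac j

/-- C_u = E|X|^u for X standard normal. -/
def Cmom (u : ℝ) : ℝ := ∫ x, |x| ^ u ∂(gaussianReal 0 1)

/-- g(s) = (s e^ε + k − s)² / (s(k−s)). -/
def gfun (ε k s : ℝ) : ℝ := (s * Real.exp ε + k - s)^2 / (s * (k - s))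

/-- d* is a minimizer of (d e^ε + k − d)²/(d(k−d)) over d ∈ {1,…,k−1}. -/
def IsOptDstar (k : ℕ) (ε : ℝ) (dstar : ℕ) : Prop :=
  dstar ∈ Finset.Icc 1 (k-1) ∧
    ∀ d ∈ Finset.Icc 1 (k-1), gfun ε k dstar ≤ gfun ε k d

/-- M(k,ε). -/
def Mconst (k : ℕ) (ε : ℝ) (dstar : ℕ) : ℝ :=
  (((k:ℝ)-1)^2 / ((k:ℝ)^2 * (Real.exp ε - 1)^2)) * gfun ε k dstar

/-- The prior set P_n = {p ∈ Δ_k : ‖p − p_U‖₂ ≤ D/√n}. -/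
def Pball (k : ℕ) (D : ℝ) (n : ℕ) : Set (Fin k → ℝ) :=
  {p | p ∈ simplex k ∧ Real.sqrt (∑ i, (p i - 1/(k:ℝ))^2) ≤ D / Real.sqrt n}

/-- The uniform distribution on P_n: normalized (k−1)-dimensional Hausdorff measure. -/
def unifP (k : ℕ) (D : ℝ) (n : ℕ) : Measure (Fin k → ℝ) :=
  ((μH[((k:ℝ)-1)]) (Pball k D n))⁻¹ • (μH[((k:ℝ)-1)]).restrict (Pball k D n)

/-- Component-wise optimal Bayes ℓ_u^u risk for the finite-output scheme `q`,
with the uniform prior on P_n. -/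
def bayesRisk (k L : ℕ) (u : ℝ) (q : Fin L → Fin k → ℝ) (D : ℝ) (n : ℕ) (i : Fin k) : ℝ≥0∞ :=
  ⨅ est : (Fin n → Fin L) → ℝ,
    ∫⁻ p, (∑ y : Fin n → Fin L,
        (∏ j, ENNReal.ofReal (∑ v, p v * q (y j) v)) *
          ENNReal.ofReal (|est y - p i| ^ u))
      ∂(unifP k D n)

end
/-- Expected ℓ₂² loss of the scheme Q_{k,ε,d} with the empirical estimator, under
source distribution p, from n i.i.d. privatized samples. -/
noncomputable def loss2 (k : ℕ) (ε : ℝ) (d n : ℕ) (p : Fin k → ℝ) : ℝ :=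
  ∑ y : Fin n → Out k d, (∏ j, margP k ε d p (y j)) * ∑ i, (empEst k d n ε y i - p i)^2


/-!
Each coordinate `y_i` of a privatized sample is a Bernoulli variable whose mean under `pQ` is
affine in `p`, `m_i = α p_i + β`, and the constants of the estimator satisfy `A α = 1`,
`A β = B`; so `p̂_i` is unbiased and `t_i` is a sum of `n` i.i.d. indicators. Hence the loss equals
`(A² / n) ∑ m_i (1 - m_i)`. Moreover `α + k β = d`, so `∑ m_i = d`, and by Cauchy–Schwarz `∑ m_i² ≥ d² / k`, with equality when all `m_i` coincide, as they do at the
uniform distribution.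
-/

open Finset

section IIDSums
variable {ι : Type*} [Fintype ι] {w : ι → ℝ}

theorem sum_pi_prod_eq_one (hw : ∑ z, w z = 1) (n : ℕ) :
    ∑ y : Fin n → ι, ∏ j, w (y j) = 1 := by
  rw [← Fintype.prod_sum]; simp [hw]

theorem sum_pi_prod_mul_sq_sum_of_mean_zero (hw : ∑ z, w z = 1) {h : ι → ℝ}
    (hh : ∑ z, w z * h z = 0) (n : ℕ) :
    ∑ y : Fin n → ι, (∏ j, w (y j)) * (∑ j, h (y j)) ^ 2 = n * ∑ z, w z * h z ^ 2 := by
  induction n with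
  | zero => simp
  | succ n ih =>
    rw [← (Fin.consEquiv fun _ => ι).sum_comp, Fintype.sum_prod_type]
    simp only [Fin.consEquiv_apply, Fin.prod_univ_succ, Fin.sum_univ_succ, Fin.cons_zero,
      Fin.cons_succ]
    calc ∑ z, ∑ y : Fin n → ι, w z * (∏ j, w (y j)) * (h z + ∑ j, h (y j)) ^ 2
        = ∑ z, (w z * h z ^ 2 * ∑ y : Fin n → ι, ∏ j, w (y j)
            + 2 * (w z * h z) * ∑ y : Fin n → ι, (∏ j, w (y j)) * ∑ j, h (y j)
            + w z * ∑ y : Fin n → ι, (∏ j, w (y j)) * (∑ j, h (y j)) ^ 2) := by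
          refine sum_congr rfl fun z _ => ?_
          rw [mul_sum, mul_sum, mul_sum, ← sum_add_distrib, ← sum_add_distrib]
          exact sum_congr rfl fun y _ => by ring
      _ = (n + 1 : ℕ) * ∑ z, w z * h z ^ 2 := by
          simp only [sum_pi_prod_eq_one hw, ih, sum_add_distrib, ← sum_mul, ← mul_sum, hh, hw]
          push_cast
          ring

theorem sum_pi_prod_mul_sq_sum_sub (hw : ∑ z, w z = 1) {g : ι → ℝ} {μ : ℝ}
    (hμ : ∑ z, w z * g z = μ) (n : ℕ) :
    ∑ y : Fin n → ι, (∏ j, w (y j)) * (∑ j, g (y j) - n * μ) ^ 2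
      = n * (∑ z, w z * g z ^ 2 - μ ^ 2) := by
  have hcentered : ∑ z, w z * (g z - μ) = 0 := by
    simp only [mul_sub, sum_sub_distrib, ← sum_mul, hw, one_mul, hμ, sub_self]
  have hsum (y : Fin n → ι) : ∑ j, g (y j) - n * μ = ∑ j, (g (y j) - μ) := by
    rw [sum_sub_distrib, sum_const, card_univ, Fintype.card_fin, nsmul_eq_mul]
  have hvariance : ∑ z, w z * (g z - μ) ^ 2 = ∑ z, w z * g z ^ 2 - μ ^ 2 := by
    have hexpand (z : ι) :
        w z * (g z - μ) ^ 2 = w z * g z ^ 2 - 2 * μ * (w z * g z) + μ ^ 2 * w z := by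
      ring
    simp only [hexpand, sum_add_distrib, sum_sub_distrib, ← mul_sum, hw, hμ]
    ring
  simp_rw [hsum, sum_pi_prod_mul_sq_sum_of_mean_zero hw hcentered, hvariance]

end IIDSums

theorem sum_mul_one_sub_le {ι : Type*} [Fintype ι] [Nonempty ι] (m : ι → ℝ) :
    ∑ i, m i * (1 - m i) ≤ (∑ i, m i) * (Fintype.card ι - ∑ i, m i) / Fintype.card ι := by
  have hcard : (0 : ℝ) < Fintype.card ι := mod_cast Fintype.card_pos
  have hcs := sq_sum_le_card_mul_sum_sq (s := univ) (f := m)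
  rw [card_univ] at hcs
  rw [le_div_iff₀ hcard]
  simp only [mul_sub, mul_one, sum_sub_distrib, ← sq]
  nlinarith

section Counting
variable {α : Type*} [DecidableEq α]

theorem filter_notMem_powersetCard (s : Finset α) (a : α) (n : ℕ) :
    {S ∈ s.powersetCard n | a ∉ S} = (s.erase a).powersetCard n := by
  ext S
  simp only [mem_filter, mem_powersetCard, subset_erase]
  tauto

theorem card_filter_mem_powersetCard {s : Finset α} {a : α} (ha : a ∈ s) {n : ℕ} (hn : 1 ≤ n) :
    #{S ∈ s.powersetCard n | a ∈ S} = (#s - 1).choose (n - 1) := by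
  simpa using card_filter_powersetCard_subset {a} s n (by simpa) (by simpa)

end Counting

section Scheme
variable {k d : ℕ} {ε : ℝ}

def Out.coord (y : Out k d) (i : Fin k) : ℝ := if i ∈ y.1 then 1 else 0

theorem Out.coord_sq (y : Out k d) (i : Fin k) : y.coord i ^ 2 = y.coord i := by
  unfold Out.coord; split_ifs <;> norm_num

theorem Out.sum_eq_sum_powersetCard (f : Finset (Fin k) → ℝ) :
    ∑ y : Out k d, f y.1 = ∑ S ∈ powersetCard d univ, f S :=
  (sum_subtype _ (fun _ => mem_powersetCard_univ) f).symm

theorem tcount_eq_sum_coord {n : ℕ} (i : Fin k) (y : Fin n → Out k d) :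
    (tcount i y : ℝ) = ∑ j, (y j).coord i := by
  simp [tcount, Out.coord, sum_boole]

noncomputable def schemeNorm (k : ℕ) (ε : ℝ) (d : ℕ) : ℝ :=
  (k-1).choose (d-1) * Real.exp ε + (k-1).choose d

theorem schemeP_eq (i : Fin k) (y : Out k d) :
    schemeP k ε d i y = (if i ∈ y.1 then Real.exp ε else 1) / schemeNorm k ε d := rfl

theorem schemeNorm_pos (hdk : d ≤ k) : 0 < schemeNorm k ε d := by
  have : 0 < ((k-1).choose (d-1) : ℝ) := mod_cast Nat.choose_pos (by omega)
  unfold schemeNorm; positivity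

theorem sum_schemeP (hd1 : 1 ≤ d) (hdk : d ≤ k) (v : Fin k) :
    ∑ y : Out k d, schemeP k ε d v y = 1 := by
  simp only [schemeP_eq]
  rw [Out.sum_eq_sum_powersetCard (fun S => (if v ∈ S then Real.exp ε else 1) / _), ← sum_div,
    sum_ite, sum_const, sum_const, card_filter_mem_powersetCard (mem_univ v) hd1,
    filter_notMem_powersetCard, card_powersetCard, card_erase_of_mem (mem_univ v)]
  simp only [card_univ, Fintype.card_fin, nsmul_eq_mul, mul_one]
  exact div_self (schemeNorm_pos hdk).ne'

noncomputable def coordSlope (k : ℕ) (ε : ℝ) (d : ℕ) : ℝ :=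
  (k-2).choose (d-1) * (Real.exp ε - 1) / schemeNorm k ε d

noncomputable def coordOffset (k : ℕ) (ε : ℝ) (d : ℕ) : ℝ :=
  ((k-1).choose (d-1) * Real.exp ε - (k-2).choose (d-1) * (Real.exp ε - 1)) / schemeNorm k ε d

theorem sum_schemeP_mul_coord (hd1 : 1 ≤ d) (v i : Fin k) :
    ∑ y : Out k d, schemeP k ε d v y * y.coord i
      = coordOffset k ε d + if v = i then coordSlope k ε d else 0 := by
  -- Counting `i ∈ S ∧ v ∈ S` would need `(k-2).choose (d-2)`, which truncated subtraction
  -- gets wrong at `d = 1`; `i ∈ S ∧ v ∉ S` is counted by `(k-2).choose (d-1)` for every `d ≥ 1`.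
  have hnum (S : Finset (Fin k)) :
      (if v ∈ S then Real.exp ε else 1) * (if i ∈ S then 1 else 0)
        = Real.exp ε * (if i ∈ S then 1 else 0)
          - (Real.exp ε - 1) * (if i ∈ S ∧ v ∉ S then 1 else 0) := by
    by_cases hi : i ∈ S <;> by_cases hv : v ∈ S <;> simp [hi, hv]
  simp only [schemeP_eq, Out.coord, div_mul_eq_mul_div]
  rw [Out.sum_eq_sum_powersetCard
      (fun S => (if v ∈ S then Real.exp ε else 1) * (if i ∈ S then 1 else 0) / _), ← sum_div]
  simp only [hnum]
  rw [sum_sub_distrib, ← mul_sum, ← mul_sum, sum_boole, sum_boole,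
    card_filter_mem_powersetCard (mem_univ i) hd1]
  rcases eq_or_ne v i with rfl | hvi
  · simp [coordOffset, coordSlope]
    ring
  · have hfilter : {S ∈ powersetCard d (univ : Finset (Fin k)) | i ∈ S ∧ v ∉ S}
        = {S ∈ powersetCard d (univ.erase v) | i ∈ S} := by
      rw [← filter_notMem_powersetCard, filter_filter]
      simp only [and_comm]
    rw [hfilter, card_filter_mem_powersetCard (mem_erase.2 ⟨hvi.symm, mem_univ i⟩) hd1,
      card_erase_of_mem (mem_univ v), if_neg hvi, coordOffset]
    simp only [card_univ, Fintype.card_fin, add_zero, Nat.sub_sub]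
    ring

theorem sum_margP (hd1 : 1 ≤ d) (hdk : d ≤ k) {p : Fin k → ℝ} (hp : ∑ i, p i = 1) :
    ∑ y : Out k d, margP k ε d p y = 1 := by
  simp only [margP]
  rw [sum_comm]
  simp [← mul_sum, sum_schemeP hd1 hdk, hp]

noncomputable def coordMean (k : ℕ) (ε : ℝ) (d : ℕ) (p : Fin k → ℝ) (i : Fin k) : ℝ :=
  ∑ y : Out k d, margP k ε d p y * y.coord i

theorem coordMean_eq (hd1 : 1 ≤ d) {p : Fin k → ℝ} (hp : ∑ i, p i = 1) (i : Fin k) :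
    coordMean k ε d p i = coordSlope k ε d * p i + coordOffset k ε d := by
  simp only [coordMean, margP, sum_mul]
  rw [sum_comm]
  simp only [mul_assoc, ← mul_sum, sum_schemeP_mul_coord hd1, mul_add, sum_add_distrib, ← sum_mul,
    hp, mul_ite, mul_zero, sum_ite_eq']
  simp
  ring

end Scheme

section Estimator
variable {k d : ℕ}

theorem choose_pred_mul_sub (hd1 : 1 ≤ d) (hdk : d ≤ k - 1) :
    ((k - 1).choose (d - 1) : ℝ) * (k - d) = (k - 2).choose (d - 1) * (k - 1) := by
  obtain ⟨k, rfl⟩ : ∃ m, k = m + 2 := ⟨k - 2, by omega⟩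
  obtain ⟨d, rfl⟩ : ∃ m, d = m + 1 := ⟨d - 1, by omega⟩
  have h := congrArg (Nat.cast : ℕ → ℝ) (Nat.choose_mul_succ_eq k d)
  push_cast [Nat.cast_sub (show d ≤ k + 1 by omega)] at h
  simp only [show k + 2 - 1 = k + 1 by omega, Nat.add_sub_cancel]
  push_cast
  linear_combination -h

theorem choose_sub_two_mul (hk : 2 ≤ k) (hd1 : 1 ≤ d) :
    ((k - 2).choose (d - 1) : ℝ) * (k - 1) = (k - 1).choose d * d := by
  obtain ⟨k, rfl⟩ : ∃ m, k = m + 2 := ⟨k - 2, by omega⟩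
  obtain ⟨d, rfl⟩ : ∃ m, d = m + 1 := ⟨d - 1, by omega⟩
  have h := congrArg (Nat.cast : ℕ → ℝ) (Nat.add_one_mul_choose_eq k d)
  push_cast at h
  simp only [show k + 2 - 1 = k + 1 by omega, Nat.add_sub_cancel]
  push_cast
  linear_combination h

theorem exp_sub_one_ne_zero {ε : ℝ} (hε : ε ≠ 0) : Real.exp ε - 1 ≠ 0 :=
  sub_ne_zero.2 (by rwa [Ne, Real.exp_eq_one_iff])

variable {ε : ℝ}

theorem Aconst_mul_coordSlope (hε : ε ≠ 0) (hd1 : 1 ≤ d) (hdk : d ≤ k - 1) :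
    Aconst k d ε * coordSlope k ε d = 1 := by
  have hN := (schemeNorm_pos (ε := ε) (show d ≤ k by omega)).ne'
  have he := exp_sub_one_ne_zero hε
  have hd : (d : ℝ) ≠ 0 := by positivity
  have hkd : (k : ℝ) - d ≠ 0 := sub_ne_zero.2 (by norm_cast; omega)
  have h1 := choose_pred_mul_sub hd1 hdk
  have h2 := choose_sub_two_mul (show 2 ≤ k by omega) hd1
  have hNdef : schemeNorm k ε d = (k-1).choose (d-1) * Real.exp ε + (k-1).choose d := rfl
  unfold Aconst coordSlope
  field_simp
  linear_combination -(d : ℝ) * Real.exp ε * h1 + (k - d : ℝ) * h2 - d * (k - d : ℝ) * hNdef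

theorem coordSlope_add_mul_coordOffset (hd1 : 1 ≤ d) (hdk : d ≤ k - 1) :
    coordSlope k ε d + k * coordOffset k ε d = d := by
  have hN := (schemeNorm_pos (ε := ε) (show d ≤ k by omega)).ne'
  have h1 := choose_pred_mul_sub hd1 hdk
  have h2 := choose_sub_two_mul (show 2 ≤ k by omega) hd1
  have hNdef : schemeNorm k ε d = (k-1).choose (d-1) * Real.exp ε + (k-1).choose d := rfl
  unfold coordSlope coordOffset
  field_simp
  linear_combination Real.exp ε * h1 + h2 - d * hNdef

theorem Aconst_mul_coordOffset (hε : ε ≠ 0) (hd1 : 1 ≤ d) (hdk : d ≤ k - 1) :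
    Aconst k d ε * coordOffset k ε d = Bconst k d ε := by
  have hslope := Aconst_mul_coordSlope hε hd1 hdk
  have hsum := coordSlope_add_mul_coordOffset (ε := ε) hd1 hdk
  have he := exp_sub_one_ne_zero hε
  have hd : (d : ℝ) ≠ 0 := by positivity
  have hk : (k : ℝ) ≠ 0 := Nat.cast_ne_zero.2 (by omega)
  have hkd : (k : ℝ) - d ≠ 0 := sub_ne_zero.2 (by norm_cast; omega)
  have : Aconst k d ε * coordOffset k ε d = (Aconst k d ε * d - 1) / k := by
    field_simp
    linear_combination Aconst k d ε * hsum - hslope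
  rw [this, Aconst, Bconst]
  field_simp
  ring

theorem Aconst_mul_coordMean_sub_Bconst (hε : ε ≠ 0) (hd1 : 1 ≤ d) (hdk : d ≤ k - 1)
    {p : Fin k → ℝ} (hp : ∑ i, p i = 1) (i : Fin k) :
    Aconst k d ε * coordMean k ε d p i - Bconst k d ε = p i := by
  rw [coordMean_eq hd1 hp, mul_add, ← mul_assoc, Aconst_mul_coordSlope hε hd1 hdk,
    Aconst_mul_coordOffset hε hd1 hdk]
  ring

end Estimator

section Loss
variable {k d n : ℕ} {ε : ℝ}

theorem loss2_eq (hε : ε ≠ 0) (hd1 : 1 ≤ d) (hdk : d ≤ k - 1) (hn : n ≠ 0)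
    {p : Fin k → ℝ} (hp : ∑ i, p i = 1) :
    loss2 k ε d n p
      = Aconst k d ε ^ 2 / n * ∑ i, coordMean k ε d p i * (1 - coordMean k ε d p i) := by
  have hn' : (n : ℝ) ≠ 0 := Nat.cast_ne_zero.2 hn
  have herror (y : Fin n → Out k d) (i : Fin k) :
      empEst k d n ε y i - p i
        = Aconst k d ε / n * (∑ j, (y j).coord i - n * coordMean k ε d p i) := by
    rw [← Aconst_mul_coordMean_sub_Bconst hε hd1 hdk hp i, empEst, tcount_eq_sum_coord]
    field_simp
    ring
  have hcoord (i : Fin k) :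
      ∑ y : Fin n → Out k d, (∏ j, margP k ε d p (y j)) * (empEst k d n ε y i - p i) ^ 2
        = Aconst k d ε ^ 2 / n * (coordMean k ε d p i * (1 - coordMean k ε d p i)) := by
    simp only [herror, mul_pow, mul_left_comm _ ((Aconst k d ε / n) ^ 2), ← mul_sum]
    have hmean : ∑ y, margP k ε d p y * y.coord i = coordMean k ε d p i := rfl
    rw [sum_pi_prod_mul_sq_sum_sub (sum_margP hd1 (by omega) hp) hmean]
    simp only [Out.coord_sq, hmean]
    field_simp
  unfold loss2
  simp only [mul_sum]
  rw [sum_comm]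
  simp only [hcoord, ← mul_sum]

theorem sum_coordMean (hd1 : 1 ≤ d) (hdk : d ≤ k - 1) {p : Fin k → ℝ} (hp : ∑ i, p i = 1) :
    ∑ i, coordMean k ε d p i = d := by
  simp only [coordMean_eq hd1 hp, sum_add_distrib, ← mul_sum, hp, sum_const, card_univ,
    Fintype.card_fin, nsmul_eq_mul]
  linear_combination coordSlope_add_mul_coordOffset (ε := ε) hd1 hdk

end Loss

theorem statement4_general (k : ℕ) (ε : ℝ) (hε : 0 < ε) (d n : ℕ)
    (hd1 : 1 ≤ d) (hdk : d ≤ k - 1) (hn : 1 ≤ n) :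
    (∀ p ∈ simplex k, loss2 k ε d n p ≤ loss2 k ε d n (fun _ => 1/(k:ℝ))) ∧
      loss2 k ε d n (fun _ => 1/(k:ℝ)) =
        (((k:ℝ)-1)^2 / ((n:ℝ) * k * (Real.exp ε - 1)^2)) *
          (((d:ℝ) * Real.exp ε + (k:ℝ) - d)^2 / ((d:ℝ) * ((k:ℝ) - d))) := by
  have hk0 : (k : ℝ) ≠ 0 := Nat.cast_ne_zero.2 (by omega)
  have huniform : ∑ _i : Fin k, 1 / (k : ℝ) = 1 := by simp [hk0]
  have hmean_uniform (i : Fin k) : coordMean k ε d (fun _ => 1 / (k : ℝ)) i = d / k := by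
    rw [eq_div_iff hk0, coordMean_eq hd1 huniform, ← coordSlope_add_mul_coordOffset hd1 hdk]
    field_simp
  have hloss_uniform : loss2 k ε d n (fun _ => 1 / (k : ℝ))
      = Aconst k d ε ^ 2 / n * (d * (k - d) / k) := by
    rw [loss2_eq hε.ne' hd1 hdk (by omega) huniform]
    simp only [hmean_uniform, sum_const, card_univ, Fintype.card_fin, nsmul_eq_mul]
    field_simp
  refine ⟨fun p hp => ?_, ?_⟩
  · rw [loss2_eq hε.ne' hd1 hdk (by omega) hp.2, hloss_uniform]
    have : Nonempty (Fin k) := ⟨⟨0, by omega⟩⟩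
    have hbound := sum_mul_one_sub_le (coordMean k ε d p)
    rw [sum_coordMean hd1 hdk hp.2, Fintype.card_fin] at hbound
    gcongr
  · have he := exp_sub_one_ne_zero hε.ne'
    have hd : (d : ℝ) ≠ 0 := by positivity
    have hkd : (k : ℝ) - d ≠ 0 := sub_ne_zero.2 (by norm_cast; omega)
    rw [hloss_uniform, Aconst]
    field_simp
    ring

theorem statement4 (k : ℕ) (hk : 2 ≤ k) (ε : ℝ) (hε : 0 < ε) (d n : ℕ)
    (hd1 : 1 ≤ d) (hdk : d ≤ k - 1) (hn : 1 ≤ n) :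
    (∀ p ∈ simplex k, loss2 k ε d n p ≤ loss2 k ε d n (fun _ => 1/(k:ℝ))) ∧
      loss2 k ε d n (fun _ => 1/(k:ℝ)) =
        (((k:ℝ)-1)^2 / ((n:ℝ) * k * (Real.exp ε - 1)^2)) *
          (((d:ℝ) * Real.exp ε + (k:ℝ) - d)^2 / ((d:ℝ) * ((k:ℝ) - d))) :=
  statement4_general k ε hε d n hd1 hdk hn
end

section
/- Let k ≥ 2, ε > 0, u ≥ 1 and n ≥ 1. For every ε-locally differentially private mechanism Q ∈ D_ε, the minimax risk satisfies r_{k,n}^{ℓ_u^u}(Q) ≥ inf_{Q' ∈ D_{ε,E}} r_{k,n}^{ℓ_u^u}(Q'). -/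
open MeasureTheory ProbabilityTheory Filter Real
open scoped ENNReal NNReal

/-!
Every ε-private mechanism is a garbling of one in D_{ε,E}. Let μ = ∑ₓ Q x, gₓ = dQₓ/dμ and
a = minₓ gₓ; privacy gives a ≤ gₓ ≤ e^ε a, so gₓ = a (1 + tₓ (e^ε - 1)) with tₓ ∈ [0, 1].
Expanding ∏_z (t_z e^{ε [z = x]} + 1 - t_z) over subsets S of the alphabet gives
Q x = ∑_S e^{ε [x ∈ S]} ν_S, i.e. Q = K ∘ q with q(S | x) = ν_S(Y) e^{ε [x ∈ S]} in D_{ε,E}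
and K(S) = ν_S / ν_S(Y).

For such a factorization, an estimator for Q, clamped to [0, 1] and averaged over K^{⊗n},
is an estimator for q whose risk at every p is no larger, by Jensen's inequality for |·|^u.
-/

open Finset

section Loss

variable {α : Type*} [MeasurableSpace α] {μ : Measure α} [IsProbabilityMeasure μ] {u : ℝ}

lemma abs_integral_sub_rpow_le (hu : 1 ≤ u) {f : α → ℝ} (c : ℝ) (hf : Integrable f μ)
    (hfu : Integrable (fun a => |f a - c| ^ u) μ) :
    |(∫ a, f a ∂μ) - c| ^ u ≤ ∫ a, |f a - c| ^ u ∂μ := by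
  have hfc : Integrable (fun a => |f a - c|) μ := (hf.sub (integrable_const c)).abs
  calc |(∫ a, f a ∂μ) - c| ^ u = |∫ a, (f a - c) ∂μ| ^ u := by
        rw [integral_sub hf (integrable_const c), integral_const, probReal_univ, one_smul]
    _ ≤ (∫ a, |f a - c| ∂μ) ^ u :=
        rpow_le_rpow (abs_nonneg _) abs_integral_le_integral_abs (by linarith)
    _ ≤ ∫ a, |f a - c| ^ u ∂μ :=
        (convexOn_rpow hu).map_integral_le
          (continuousOn_id.rpow_const fun _ _ => Or.inr (by linarith)) isClosed_Ici
          (ae_of_all _ fun a => Set.mem_Ici.2 (abs_nonneg _)) hfc hfu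

lemma ofReal_sum_abs_integral_sub_rpow_le (hu : 1 ≤ u) {k : ℕ} {f : α → Fin k → ℝ}
    (hf : Measurable f) (hf01 : ∀ a i, f a i ∈ Set.Icc (0 : ℝ) 1) {p : Fin k → ℝ}
    (hp : ∀ i, p i ∈ Set.Icc (0 : ℝ) 1) :
    ENNReal.ofReal (∑ i, |(∫ a, f a i ∂μ) - p i| ^ u)
      ≤ ∫⁻ a, ENNReal.ofReal (∑ i, |f a i - p i| ^ u) ∂μ := by
  have hbdd : ∀ {g : α → ℝ}, Measurable g → (∀ a, |g a| ≤ 1) → Integrable g μ := fun hg hb =>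
    (integrable_const (1 : ℝ)).mono hg.aestronglyMeasurable
      (ae_of_all _ fun a => by simpa using hb a)
  have hfi : ∀ i, Integrable (fun a => f a i) μ := fun i =>
    hbdd ((measurable_pi_apply i).comp hf) fun a =>
      abs_le.2 ⟨by linarith [(hf01 a i).1], (hf01 a i).2⟩
  have hloss : ∀ i, Integrable (fun a => |f a i - p i| ^ u) μ := fun i =>
    hbdd (by fun_prop) fun a => by
      rw [abs_of_nonneg (by positivity)]
      refine rpow_le_one (abs_nonneg _) (abs_sub_le_iff.2 ⟨?_, ?_⟩) (by linarith) <;>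
        linarith [(hf01 a i).1, (hf01 a i).2, (hp i).1, (hp i).2]
  have hsum : ∀ g : Fin k → ℝ, ENNReal.ofReal (∑ i, |g i - p i| ^ u)
      = ∑ i, ENNReal.ofReal (|g i - p i| ^ u) := fun g =>
    ENNReal.ofReal_sum_of_nonneg fun i _ => by positivity
  simp only [hsum]
  rw [lintegral_finsetSum _ fun i _ => by fun_prop]
  gcongr with i
  rw [← ofReal_integral_eq_lintegral_ofReal (hloss i) (ae_of_all _ fun a => by positivity)]
  exact ENNReal.ofReal_le_ofReal (abs_integral_sub_rpow_le hu _ (hfi i) (hloss i))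

end Loss

lemma abs_projIcc_sub_le {a b p : ℝ} (h : a ≤ b) (hp : p ∈ Set.Icc a b) (t : ℝ) :
    |(Set.projIcc a b h t : ℝ) - p| ≤ |t - p| := by
  have := (LipschitzWith.projIcc h).dist_le_mul t p
  rwa [NNReal.coe_one, one_mul, Subtype.dist_eq, Set.projIcc_of_mem h hp, Real.dist_eq,
    Real.dist_eq] at this

section Mixture

variable {Y : Type*} [MeasurableSpace Y] {ι : Type*} [Fintype ι]

lemma MeasureTheory.isProbabilityMeasure_sum_smul {w : ι → ℝ≥0∞} (hw : ∑ c, w c = 1)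
    (ν : ι → Measure Y) [∀ c, IsProbabilityMeasure (ν c)] : IsProbabilityMeasure (∑ c, w c • ν c) :=
  ⟨by simp [hw]⟩

lemma MeasureTheory.Measure.pi_sum_smul (n : ℕ) {w : ι → ℝ≥0∞} (hw : ∑ c, w c = 1)
    (ν : ι → Measure Y) [∀ c, IsProbabilityMeasure (ν c)] :
    Measure.pi (fun _ : Fin n => ∑ c, w c • ν c)
      = ∑ s : Fin n → ι, (∏ j, w (s j)) • Measure.pi fun j => ν (s j) := by
  have := isProbabilityMeasure_sum_smul hw ν
  refine Measure.pi_eq fun A _ => ?_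
  simp only [Measure.coe_finsetSum, Finset.sum_apply, Measure.smul_apply, smul_eq_mul,
    Measure.pi_pi, ← prod_mul_distrib]
  exact (prod_univ_sum (fun _ => univ) fun j c => w c * ν c (A j)).symm

lemma MeasureTheory.lintegral_pi_sum_smul (n : ℕ) {w : ι → ℝ≥0∞} (hw : ∑ c, w c = 1)
    (ν : ι → Measure Y) [∀ c, IsProbabilityMeasure (ν c)] (F : (Fin n → Y) → ℝ≥0∞) :
    ∫⁻ y, F y ∂Measure.pi (fun _ : Fin n => ∑ c, w c • ν c)
      = ∑ s : Fin n → ι, (∏ j, w (s j)) * ∫⁻ y, F y ∂Measure.pi fun j => ν (s j) := by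
  simp only [Measure.pi_sum_smul n hw ν, lintegral_finsetSum_measure, lintegral_smul_measure,
    smul_eq_mul]

lemma MeasureTheory.Measure.pi_dirac {n : ℕ} [MeasurableSingletonClass Y] (s : Fin n → Y) :
    Measure.pi (fun j => Measure.dirac (s j)) = Measure.dirac s := by
  classical
  refine Measure.pi_eq (μ := fun j => Measure.dirac (s j)) fun A hA => ?_
  simp [Measure.dirac_apply' _ (MeasurableSet.univ_pi hA), Measure.dirac_apply' _ (hA _),
    Set.indicator, prod_boole]

end Mixture

lemma mem_Icc_of_mem_simplex {k : ℕ} {p : Fin k → ℝ} (hp : p ∈ simplex k) (i : Fin k) :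
    p i ∈ Set.Icc (0 : ℝ) 1 :=
  ⟨hp.1 i, hp.2 ▸ single_le_sum (fun j _ => hp.1 j) (mem_univ i)⟩

section PostProcessing

variable {Y : Type} [MeasurableSpace Y] {k L : ℕ}

lemma matKernel_apply (q : Fin L → Fin k → ℝ) (x : Fin k) :
    matKernel k L q x = ∑ j, ENNReal.ofReal (q j x) • Measure.dirac j := rfl

lemma marginal_eq_sum_smul {Q : Kernel (Fin k) Y} {q : Fin L → Fin k → ℝ}
    {K : Fin L → Measure Y} (hQ : ∀ x, Q x = ∑ j, ENNReal.ofReal (q j x) • K j)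
    (p : Fin k → ℝ) :
    marginal Q p = ∑ j, (∑ x, ENNReal.ofReal (p x) * ENNReal.ofReal (q j x)) • K j := by
  simp only [marginal, hQ, smul_sum, smul_smul, sum_smul]
  exact sum_comm

lemma sum_sum_ofReal_mul_eq_one {p : Fin k → ℝ} (hp : p ∈ simplex k) {q : Fin L → Fin k → ℝ}
    (hq0 : ∀ j x, 0 ≤ q j x) (hq1 : ∀ x, ∑ j, q j x = 1) :
    ∑ j, ∑ x, ENNReal.ofReal (p x) * ENNReal.ofReal (q j x) = 1 := by
  simp only [← ENNReal.ofReal_mul (hp.1 _)]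
  rw [sum_comm]
  simp only [← ENNReal.ofReal_sum_of_nonneg fun j _ => mul_nonneg (hp.1 _) (hq0 j _),
    ← mul_sum, hq1, mul_one]
  rw [← ENNReal.ofReal_sum_of_nonneg fun x _ => hp.1 x, hp.2, ENNReal.ofReal_one]

theorem minimaxRisk_matKernel_le {n : ℕ} {u : ℝ} (hu : 1 ≤ u) (Q : Kernel (Fin k) Y)
    {q : Fin L → Fin k → ℝ} (hq0 : ∀ j x, 0 ≤ q j x) (hq1 : ∀ x, ∑ j, q j x = 1)
    (K : Fin L → Measure Y) [∀ j, IsProbabilityMeasure (K j)]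
    (hQ : ∀ x, Q x = ∑ j, ENNReal.ofReal (q j x) • K j) :
    minimaxRisk k n u (matKernel k L q) ≤ minimaxRisk k n u Q := by
  refine le_iInf₂ fun est hest => ?_
  -- clamping makes `estC` bounded, so that its average over `K ^ n` below is a true integral
  set estC : (Fin n → Y) → Fin k → ℝ := fun y i => Set.projIcc 0 1 zero_le_one (est y i)
  have hestC : Measurable estC :=
    measurable_pi_lambda _ fun i => (continuous_subtype_val.comp continuous_projIcc).measurable.comp
      ((measurable_pi_apply i).comp hest)
  set est' : (Fin n → Fin L) → Fin k → ℝ := fun t i => ∫ y, estC y i ∂Measure.pi fun j => K (t j)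
  calc minimaxRisk k n u (matKernel k L q) ≤ risk k n u (matKernel k L q) est' :=
        iInf₂_le est' (measurable_of_countable est')
    _ ≤ risk k n u Q estC := iSup₂_mono fun p hp => by
        have hw := sum_sum_ofReal_mul_eq_one hp hq0 hq1
        rw [marginal_eq_sum_smul hQ, marginal_eq_sum_smul (matKernel_apply q),
          lintegral_pi_sum_smul n hw, lintegral_pi_sum_smul n hw]
        gcongr with t
        rw [Measure.pi_dirac, lintegral_dirac]
        exact ofReal_sum_abs_integral_sub_rpow_le hu hestC (fun y i => Subtype.prop _)
          (mem_Icc_of_mem_simplex hp)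
    _ ≤ risk k n u Q est := iSup₂_mono fun p hp => lintegral_mono fun y =>
        ENNReal.ofReal_le_ofReal <| sum_le_sum fun i _ => rpow_le_rpow (abs_nonneg _)
          (abs_projIcc_sub_le _ (mem_Icc_of_mem_simplex hp i) _) (by linarith)

end PostProcessing

noncomputable section ExtremalRatio

variable {α : Type*} [DecidableEq α]

def extremalRatio (ε : ℝ) (S : Finset α) (x : α) : ℝ := if x ∈ S then exp ε else 1

variable {ε : ℝ}

lemma extremalRatio_pos (S : Finset α) (x : α) : 0 < extremalRatio ε S x := by
  unfold extremalRatio; split <;> positivity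

lemma one_le_extremalRatio (hε : 0 ≤ ε) (S : Finset α) (x : α) :
    1 ≤ extremalRatio ε S x := by
  unfold extremalRatio; split
  · exact one_le_exp hε
  · rfl

lemma extremalRatio_le_exp (hε : 0 ≤ ε) (S : Finset α) (x : α) :
    extremalRatio ε S x ≤ exp ε := by
  unfold extremalRatio; split
  · rfl
  · exact one_le_exp hε

end ExtremalRatio

noncomputable section Extremal

variable {α : Type*} [Fintype α]

lemma iInf_le_and_le_exp_mul_iInf {ε : ℝ} {g : α → ℝ} (hg : ∀ x x', g x ≤ exp ε * g x')
    (x : α) : ⨅ x', g x' ≤ g x ∧ g x ≤ exp ε * ⨅ x', g x' := by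
  have : Nonempty α := ⟨x⟩
  refine ⟨ciInf_le (Finite.bddBelow_range g) x, ?_⟩
  rw [Real.mul_iInf_of_nonneg (exp_pos ε).le]
  exact le_ciInf (hg x)

variable [DecidableEq α]

def bernoulliWeight (t : α → ℝ) (S : Finset α) : ℝ := (∏ z ∈ S, t z) * ∏ z ∈ Sᶜ, (1 - t z)

lemma bernoulliWeight_nonneg {t : α → ℝ} (ht : ∀ z, t z ∈ Set.Icc (0 : ℝ) 1) (S : Finset α) :
    0 ≤ bernoulliWeight t S :=
  mul_nonneg (prod_nonneg fun z _ => (ht z).1) (prod_nonneg fun z _ => sub_nonneg.2 (ht z).2)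

lemma sum_extremalRatio_mul_bernoulliWeight (ε : ℝ) (t : α → ℝ) (x : α) :
    ∑ S, extremalRatio ε S x * bernoulliWeight t S = 1 + t x * (exp ε - 1) := by
  have hprod : ∀ S : Finset α, extremalRatio ε S x * bernoulliWeight t S
      = (∏ z ∈ S, t z * extremalRatio ε {z} x) * ∏ z ∈ univ \ S, (1 - t z) := fun S => by
    simp only [bernoulliWeight, extremalRatio, prod_mul_distrib, mem_singleton, prod_ite_eq,
      compl_eq_univ_sdiff]
    ring
  rw [sum_congr rfl fun S _ => hprod S, ← powerset_univ, ← prod_add,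
    ← mul_prod_erase univ _ (mem_univ x), prod_eq_one fun z hz => ?_]
  · simp [extremalRatio]; ring
  · simp [extremalRatio, (ne_of_mem_erase hz).symm]

def extremalComponent (ε : ℝ) (g : α → ℝ) (S : Finset α) : ℝ :=
  (⨅ x, g x) * bernoulliWeight (fun z => (g z - ⨅ x, g x) / ((⨅ x, g x) * (exp ε - 1))) S

variable {ε : ℝ} {g : α → ℝ}

lemma extremalComponent_nonneg (hg0 : ∀ x, 0 ≤ g x) (hg : ∀ x x', g x ≤ exp ε * g x')
    (S : Finset α) : 0 ≤ extremalComponent ε g S := by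
  refine mul_nonneg (Real.iInf_nonneg hg0) (bernoulliWeight_nonneg (fun z => ?_) S)
  obtain ⟨h₁, h₂⟩ := iInf_le_and_le_exp_mul_iInf hg z
  have hden : g z - ⨅ x, g x ≤ (⨅ x, g x) * (exp ε - 1) := by linarith
  exact ⟨div_nonneg (by linarith) (by linarith), div_le_one_of_le₀ hden (by linarith)⟩

lemma sum_extremalRatio_mul_extremalComponent (hg : ∀ x x', g x ≤ exp ε * g x') (x : α) :
    ∑ S, extremalRatio ε S x * extremalComponent ε g S = g x := by
  obtain ⟨h₁, h₂⟩ := iInf_le_and_le_exp_mul_iInf hg x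
  simp only [extremalComponent, mul_left_comm _ (⨅ x, g x), ← mul_sum,
    sum_extremalRatio_mul_bernoulliWeight]
  -- if `(⨅ g) * (exp ε - 1) = 0` the division returns `0`, and `g x = ⨅ g` by the bounds
  rcases eq_or_ne ((⨅ x, g x) * (exp ε - 1)) 0 with h | h
  · rw [h, div_zero, zero_mul, add_zero, mul_one]
    linarith
  · obtain ⟨ha, hE⟩ := mul_ne_zero_iff.1 h
    field_simp
    ring

end Extremal

section MemDEE

variable {k L : ℕ} {ε : ℝ}

lemma memDEE_mul_extremalRatio (hε : 0 ≤ ε) {b : Fin L → ℝ} (hb : ∀ j, 0 < b j)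
    (S : Fin L → Finset (Fin k)) (hsum : ∀ v, ∑ j, b j * extremalRatio ε (S j) v = 1) :
    memDEE k L ε fun j v => b j * extremalRatio ε (S j) v := by
  refine ⟨fun j v => (mul_pos (hb j) (extremalRatio_pos _ _)).le, hsum, fun j v v' => ?_,
    fun j v => ?_⟩
  · calc b j * extremalRatio ε (S j) v ≤ b j * (exp ε * extremalRatio ε (S j) v') :=
          mul_le_mul_of_nonneg_left ((extremalRatio_le_exp hε _ _).trans
            (le_mul_of_one_le_right (exp_pos ε).le (one_le_extremalRatio hε _ _))) (hb j).le
      _ = exp ε * (b j * extremalRatio ε (S j) v') := mul_left_comm _ _ _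
  · have : Nonempty (Fin k) := ⟨v⟩
    obtain ⟨v₀, hv₀⟩ :=
      exists_eq_ciInf_of_finite (f := fun v' => b j * extremalRatio ε (S j) v')
    have hmin := hv₀ ▸ ciInf_le (Finite.bddBelow_range _) v
    rw [← hv₀]
    have hb0 := (hb j).ne'
    simp only [extremalRatio] at hmin ⊢
    -- the ratio is `1`, `exp ε`, or `(exp ε)⁻¹`; the last forces `ε = 0` by minimality of `v₀`
    split_ifs at hmin ⊢ <;> field_simp <;> simp
    exact Or.inl (le_antisymm (exp_le_one_iff.1 (le_of_mul_le_mul_left hmin (hb j))) hε)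

end MemDEE

lemma MeasureTheory.withDensity_finsetSum {Y : Type*} [MeasurableSpace Y] (μ : Measure Y)
    {ι : Type*} (s : Finset ι) {f : ι → Y → ℝ≥0∞} (hf : ∀ i ∈ s, Measurable (f i)) :
    μ.withDensity (fun y => ∑ i ∈ s, f i y) = ∑ i ∈ s, μ.withDensity (f i) := by
  ext t ht
  simp only [withDensity_apply _ ht, Measure.coe_finsetSum, Finset.sum_apply]
  exact lintegral_finsetSum s hf

lemma MeasureTheory.Measure.absolutelyContinuous_sum {Y ι : Type*} [MeasurableSpace Y]
    [Fintype ι] (μ : ι → Measure Y) (i : ι) : μ i ≪ ∑ j, μ j := fun s hs => by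
  rw [Measure.coe_finsetSum, Finset.sum_apply, sum_eq_zero_iff] at hs
  exact hs i (mem_univ i)

noncomputable section Decomposition

variable {Y : Type} [MeasurableSpace Y] {k : ℕ} {ε : ℝ} {Q : Kernel (Fin k) Y}


lemma IsPrivate.ae_rnDeriv_le (hQ : IsPrivate ε Q) :
    ∀ᵐ y ∂(∑ x, Q x), ∀ x x',
      (Q x).rnDeriv (∑ x, Q x) y ≤ ENNReal.ofReal (exp ε) * (Q x').rnDeriv (∑ x, Q x) y := by
  have := hQ.1
  simp only [ae_all_iff]
  intro x x'
  refine ae_le_of_forall_setLIntegral_le_of_sigmaFinite (Measure.measurable_rnDeriv _ _)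
    fun s hs _ => ?_
  rw [lintegral_const_mul _ (Measure.measurable_rnDeriv _ _),
    Measure.setLIntegral_rnDeriv (Measure.absolutelyContinuous_sum (fun x => Q x) x),
    Measure.setLIntegral_rnDeriv (Measure.absolutelyContinuous_sum (fun x => Q x) x')]
  exact hQ.2 s hs x x'

def extremalPart (Q : Kernel (Fin k) Y) (ε : ℝ) (S : Finset (Fin k)) : Measure Y :=
  (∑ x, Q x).withDensity fun y =>
    ENNReal.ofReal (extremalComponent ε (fun x => ((Q x).rnDeriv (∑ x', Q x') y).toReal) S)

lemma measurable_extremalComponent_rnDeriv (Q : Kernel (Fin k) Y) (ε : ℝ) (S : Finset (Fin k)) :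
    Measurable fun y =>
      extremalComponent ε (fun x => ((Q x).rnDeriv (∑ x', Q x') y).toReal) S := by
  unfold extremalComponent bernoulliWeight
  fun_prop

theorem IsPrivate.eq_sum_smul_extremalPart (hQ : IsPrivate ε Q) (x : Fin k) :
    Q x = ∑ S, ENNReal.ofReal (extremalRatio ε S x) • extremalPart Q ε S := by
  have := hQ.1
  set μ := ∑ x, Q x
  set g : Y → Fin k → ℝ := fun y x => ((Q x).rnDeriv μ y).toReal
  have hdens : (Q x).rnDeriv μ =ᵐ[μ] fun y =>
      ∑ S, ENNReal.ofReal (extremalRatio ε S x) * ENNReal.ofReal (extremalComponent ε (g y) S) := by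
    filter_upwards [hQ.ae_rnDeriv_le, ae_all_iff.2 fun x => Measure.rnDeriv_ne_top (Q x) μ]
      with y hle hfin
    have hg : ∀ x x', g y x ≤ exp ε * g y x' := fun x x' => by
      simpa [g, ENNReal.toReal_mul, (exp_pos ε).le] using
        ENNReal.toReal_mono (ENNReal.mul_ne_top ENNReal.ofReal_ne_top (hfin x')) (hle x x')
    have hg0 : ∀ x, 0 ≤ g y x := fun x => ENNReal.toReal_nonneg
    rw [← ENNReal.ofReal_toReal (hfin x)]
    change ENNReal.ofReal (g y x) = _
    rw [← sum_extremalRatio_mul_extremalComponent hg x, ENNReal.ofReal_sum_of_nonneg fun S _ =>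
      mul_nonneg (extremalRatio_pos S x).le (extremalComponent_nonneg hg0 hg S)]
    exact sum_congr rfl fun S _ => ENNReal.ofReal_mul (extremalRatio_pos S x).le
  have hmeas := fun S => (measurable_extremalComponent_rnDeriv Q ε S).ennreal_ofReal
  rw [← Measure.withDensity_rnDeriv_eq _ _ (Measure.absolutelyContinuous_sum (fun x => Q x) x),
    withDensity_congr_ae hdens, withDensity_finsetSum _ _ fun S _ => (hmeas S).const_mul _]
  exact sum_congr rfl fun S _ => withDensity_smul _ (hmeas S)

end Decomposition

lemma sum_eq_one_of_eq_sum_smul {Y : Type*} [MeasurableSpace Y] {L : ℕ} {μ : Measure Y}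
    [IsProbabilityMeasure μ] {c : Fin L → ℝ} (hc : ∀ j, 0 ≤ c j) {K : Fin L → Measure Y}
    [∀ j, IsProbabilityMeasure (K j)] (h : μ = ∑ j, ENNReal.ofReal (c j) • K j) :
    ∑ j, c j = 1 := by
  have := congrArg (fun ν : Measure Y => ν Set.univ) h
  simp only [measure_univ, Measure.coe_finsetSum, Finset.sum_apply, Measure.smul_apply,
    smul_eq_mul, mul_one] at this
  rwa [← ENNReal.ofReal_sum_of_nonneg fun j _ => hc j, eq_comm, ENNReal.ofReal_eq_one] at this

theorem IsPrivate.exists_memDEE_factorization {Y : Type} [MeasurableSpace Y] {k : ℕ} {ε : ℝ}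
    {Q : Kernel (Fin k) Y} (hε : 0 ≤ ε) (hk : 0 < k) (hQ : IsPrivate ε Q) :
    ∃ (L : ℕ) (q : Fin L → Fin k → ℝ) (K : Fin L → Measure Y), memDEE k L ε q ∧
      (∀ j, IsProbabilityMeasure (K j)) ∧ ∀ x, Q x = ∑ j, ENNReal.ofReal (q j x) • K j := by
  classical
  have := hQ.1
  set ν := extremalPart Q ε
  have hQν : ∀ x, Q x = ∑ S, ENNReal.ofReal (extremalRatio ε S x) • ν S :=
    hQ.eq_sum_smul_extremalPart
  have hν_le : ∀ S, ν S Set.univ ≤ 1 := fun S => by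
    let x₀ : Fin k := ⟨0, hk⟩
    calc ν S Set.univ
        ≤ ENNReal.ofReal (extremalRatio ε S x₀) * ν S Set.univ :=
          le_mul_of_one_le_left' (ENNReal.one_le_ofReal.2 (one_le_extremalRatio hε S x₀))
      _ ≤ ∑ S', ENNReal.ofReal (extremalRatio ε S' x₀) * ν S' Set.univ :=
          single_le_sum (f := fun S' => ENNReal.ofReal (extremalRatio ε S' x₀) * ν S' Set.univ)
            (fun _ _ => zero_le) (mem_univ S)
      _ = Q x₀ Set.univ := by simp [hQν x₀, Measure.coe_finsetSum]
      _ = 1 := measure_univ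
  let e := Fintype.equivFin {S // ν S ≠ 0}
  let S : Fin (Fintype.card {S // ν S ≠ 0}) → Finset (Fin k) := fun j => (e.symm j).1
  let K := fun j => (ν (S j) Set.univ)⁻¹ • ν (S j)
  have hν0 : ∀ j, ν (S j) Set.univ ≠ 0 := fun j => by
    simpa [Measure.measure_univ_eq_zero] using (e.symm j).2
  have hνtop : ∀ j, ν (S j) Set.univ ≠ ⊤ := fun j =>
    ne_top_of_le_ne_top ENNReal.one_ne_top (hν_le _)
  have hK : ∀ j, IsProbabilityMeasure (K j) := fun j =>
    ⟨by simp [K, ENNReal.inv_mul_cancel (hν0 j) (hνtop j)]⟩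
  have hQK : ∀ x, Q x = ∑ j,
      ENNReal.ofReal ((ν (S j) Set.univ).toReal * extremalRatio ε (S j) x) • K j := by
    intro x
    have hterm : ∀ j, ENNReal.ofReal ((ν (S j) Set.univ).toReal * extremalRatio ε (S j) x) • K j
        = ENNReal.ofReal (extremalRatio ε (S j) x) • ν (S j) := fun j => by
      rw [ENNReal.ofReal_mul ENNReal.toReal_nonneg, ENNReal.ofReal_toReal (hνtop j), smul_smul,
        mul_right_comm, ENNReal.mul_inv_cancel (hν0 j) (hνtop j), one_mul]
    rw [hQν x, sum_congr rfl fun j _ => hterm j,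
      e.symm.sum_comp (fun c => ENNReal.ofReal (extremalRatio ε c.1 x) • ν c.1),
      ← sum_subtype (univ.filter fun S => ν S ≠ 0) (by simp)
        fun S => ENNReal.ofReal (extremalRatio ε S x) • ν S]
    exact (sum_filter_of_ne (p := fun S => ν S ≠ 0) fun S _ h hS =>
      h (by rw [hS, smul_zero])).symm
  refine ⟨_, _, K, memDEE_mul_extremalRatio hε (fun j => ENNReal.toReal_pos (hν0 j) (hνtop j)) S
    fun v => sum_eq_one_of_eq_sum_smul (fun j => ?_) (hQK v), hK, hQK⟩
  exact mul_nonneg ENNReal.toReal_nonneg (extremalRatio_pos _ _).le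

theorem statement5_general {Y : Type} [MeasurableSpace Y] (k : ℕ) (hk : 2 ≤ k) (ε u : ℝ)
    (hε : 0 < ε) (hu : 1 ≤ u) (n : ℕ)
    (Q : Kernel (Fin k) Y) (hQ : IsPrivate ε Q) :
    ⨅ (L : ℕ) (q : Fin L → Fin k → ℝ) (_ : memDEE k L ε q),
        minimaxRisk k n u (matKernel k L q) ≤ minimaxRisk k n u Q := by
  obtain ⟨L, q, K, hq, hK, hQK⟩ := hQ.exists_memDEE_factorization hε.le (by omega)
  exact iInf₂_le_of_le L q <| iInf_le_of_le hq <|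
    minimaxRisk_matKernel_le hu Q hq.1 hq.2.1 K hQK

theorem statement5 {Y : Type} [MeasurableSpace Y] (k : ℕ) (hk : 2 ≤ k) (ε u : ℝ)
    (hε : 0 < ε) (hu : 1 ≤ u) (n : ℕ) (hn : 1 ≤ n)
    (Q : Kernel (Fin k) Y) (hQ : IsPrivate ε Q) :
    ⨅ (L : ℕ) (q : Fin L → Fin k → ℝ) (_ : memDEE k L ε q),
        minimaxRisk k n u (matKernel k L q) ≤ minimaxRisk k n u Q :=
  statement5_general k hk ε u hε hu n Q hQ
end

section
/- Let k ≥ 2 and ε > 0. For every scheme Q ∈ D_{ε,E} with output alphabet Y = {1,…,L} and every j ∈ {1,…,L}, Σ_{i=1}^k q_{ji}^2 / q_j^2 ≤ k (1 + (e^ε − 1)^2 · d*(k − d*)/(d* e^ε + k − d*)^2). -/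
open MeasureTheory ProbabilityTheory Filter Real
open scoped ENNReal NNReal

/-!
Every entry of row `j` of a scheme in `D_{ε,E}` is `m` or `m e^ε`, where `m` is the row minimum
(which cannot vanish, since `x / 0 = 0` is neither `1` nor `e^ε`). If `a` inputs get `m e^ε`, then
`∑ᵢ q_{ji}² / q_j² = k (1 + (e^ε - 1)² a (k - a) / (a e^ε + k - a)²)`, and the last fraction is
`1 / g(a) ≤ 1 / g(d*)` by the optimality of `d*`.
-/

lemma ne_zero_and_eq_or_eq_mul_of_div_mem {x m c : ℝ} (hc : c ≠ 0)
    (h : x / m ∈ ({1, c} : Set ℝ)) : m ≠ 0 ∧ (x = m ∨ x = m * c) := by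
  have hm : m ≠ 0 := by
    rintro rfl
    rcases h with h | h
    · simp at h
    · exact hc (by simpa using h.symm)
  refine ⟨hm, ?_⟩
  rcases h with h | h
  · exact .inl ((div_eq_one_iff_eq hm).1 h)
  · rw [Set.mem_singleton_iff, div_eq_iff hm, mul_comm] at h
    exact .inr h

open Finset in
lemma sum_comp_of_eq_or_eq {ι : Type*} [Fintype ι] (f : ι → ℝ) (g : ℝ → ℝ) {m m' : ℝ}
    (hf : ∀ v, f v = m ∨ f v = m') :
    ∑ v, g (f v) = #{v | f v = m'} * g m' + (Fintype.card ι - #{v | f v = m'}) * g m := by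
  classical
  calc ∑ v, g (f v) = ∑ v, if f v = m' then g m' else g m :=
        sum_congr rfl fun v _ => by
          split_ifs with h
          · rw [h]
          · rw [(hf v).resolve_right h]
    _ = _ := by
        rw [sum_ite, sum_const, sum_const, nsmul_eq_mul, nsmul_eq_mul, ← card_univ,
          ← card_filter_add_card_filter_not (s := univ) (fun v => f v = m')]
        push_cast
        ring

lemma sum_sq_div_mean_sq_eq {k a m c : ℝ} (hm : m ≠ 0) (hk : k ≠ 0)
    (hs : a * c + k - a ≠ 0) :
    (a * (m * c) ^ 2 + (k - a) * m ^ 2) / ((1 / k) * (a * (m * c) + (k - a) * m)) ^ 2 =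
      k * (1 + (c - 1) ^ 2 * (a * (k - a) / (a * c + k - a) ^ 2)) := by
  have hs' : a * (m * c) + (k - a) * m = m * (a * c + k - a) := by ring
  rw [hs']
  field_simp
  ring

lemma gfun_pos {ε k s : ℝ} (hs : 0 < s) (hsk : s < k) : 0 < gfun ε k s := by
  have : 0 < s * Real.exp ε + k - s := by nlinarith [Real.exp_pos ε]
  exact div_pos (by positivity) (mul_pos hs (by linarith))

/-- For `a ∈ {0, k}` the left side is `0⁻¹ = 0`, since then `gfun ε k a = _ / 0 = 0`. -/
lemma inv_gfun_le_of_isOptDstar {k : ℕ} {ε : ℝ} {dstar a : ℕ} (hd : IsOptDstar k ε dstar)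
    (ha : a ≤ k) : (gfun ε k a)⁻¹ ≤ (gfun ε k dstar)⁻¹ := by
  obtain ⟨hd1, hd2⟩ := Finset.mem_Icc.1 hd.1
  have hpos : 0 < gfun ε k dstar :=
    gfun_pos (by exact_mod_cast hd1) (by exact_mod_cast (show dstar < k by omega))
  by_cases ha' : a ∈ Finset.Icc 1 (k - 1)
  · exact inv_anti₀ hpos (hd.2 a ha')
  · have : a = 0 ∨ a = k := by rw [Finset.mem_Icc] at ha'; omega
    have hzero : gfun ε k a = 0 := by rcases this with rfl | rfl <;> simp [gfun]
    rw [hzero, inv_zero]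
    exact (inv_pos.2 hpos).le

theorem statement6_general (k L : ℕ) (ε : ℝ)
    (q : Fin L → Fin k → ℝ) (hq : memDEE k L ε q)
    (dstar : ℕ) (hd : IsOptDstar k ε dstar) (j : Fin L) :
    ∑ i, (q j i)^2 / (qrow q j)^2 ≤
      (k:ℝ) * (1 + (Real.exp ε - 1)^2 *
        ((dstar:ℝ) * ((k:ℝ) - dstar) / (((dstar:ℝ) * Real.exp ε + (k:ℝ) - dstar)^2))) := by
  classical
  have hk : 2 ≤ k := by have := Finset.mem_Icc.1 hd.1; omega
  set m := ⨅ v, q j v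
  have hrow v := ne_zero_and_eq_or_eq_mul_of_div_mem (Real.exp_pos ε).ne' (hq.2.2.2 j v)
  have hm : m ≠ 0 := (hrow ⟨0, by omega⟩).1
  set a : ℕ := Finset.card {v | q j v = m * Real.exp ε}
  have hak : a ≤ k := (Finset.card_le_univ _).trans (Fintype.card_fin k).le
  have hsum (g : ℝ → ℝ) : ∑ v, g (q j v) = a * g (m * Real.exp ε) + (k - a) * g m := by
    simpa using sum_comp_of_eq_or_eq (q j) g fun v => (hrow v).2
  have hsum₁ : ∑ v, q j v = a * (m * Real.exp ε) + (k - a) * m := hsum id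
  have hsum₂ : ∑ v, q j v ^ 2 = a * (m * Real.exp ε) ^ 2 + (k - a) * m ^ 2 := hsum (· ^ 2)
  have hs : 0 < (a : ℝ) * Real.exp ε + k - a := by
    have : (a : ℝ) ≤ k := by exact_mod_cast hak
    rcases Nat.eq_zero_or_pos a with ha | ha
    · rw [ha, Nat.cast_zero, zero_mul, zero_add, sub_zero]
      exact_mod_cast (by omega : 0 < k)
    · nlinarith [Real.exp_pos ε, (show (0 : ℝ) < a by exact_mod_cast ha)]
  calc ∑ i, (q j i)^2 / (qrow q j)^2
      = k * (1 + (Real.exp ε - 1) ^ 2 * (gfun ε k a)⁻¹) := by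
        rw [← Finset.sum_div, qrow, hsum₂, hsum₁, gfun, inv_div]
        exact sum_sq_div_mean_sq_eq hm (by positivity) hs.ne'
    _ ≤ _ := by
        gcongr
        exact (inv_gfun_le_of_isOptDstar hd hak).trans_eq (by rw [gfun, inv_div])

theorem statement6 (k L : ℕ) (hk : 2 ≤ k) (ε : ℝ) (hε : 0 < ε)
    (q : Fin L → Fin k → ℝ) (hq : memDEE k L ε q)
    (dstar : ℕ) (hd : IsOptDstar k ε dstar) (j : Fin L) :
    ∑ i, (q j i)^2 / (qrow q j)^2 ≤
      (k:ℝ) * (1 + (Real.exp ε - 1)^2 *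
        ((dstar:ℝ) * ((k:ℝ) - dstar) / (((dstar:ℝ) * Real.exp ε + (k:ℝ) - dstar)^2))) :=
  statement6_general k L ε q hq dstar hd j
end

section
/- Let ε > 0 and let k > 0 be a real number. The function g(s) = (s e^ε + k − s)^2 / (s(k − s)) on the open interval (0, k) is strictly decreasing on (0, k/(e^ε + 1)] and strictly increasing on [k/(e^ε + 1), k); in particular, g attains its unique global minimum on (0, k) at s* = k/(e^ε + 1). -/
open MeasureTheory ProbabilityTheory Filter Real
open scoped ENNReal NNReal

section

variable {ε k s t : ℝ}

/- With r = s / (k - s) one has g = e^{2ε} r + 1/r + 2e^ε, so g t - g s has the sign of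
e^{2ε} r(s) r(t) - 1, that is, of e^{2ε} s t - (k - s)(k - t). -/
lemma exists_pos_gfun_sub_gfun_eq (hs : 0 < s) (hst : s < t) (htk : t < k) :
    ∃ c > 0, gfun ε k t - gfun ε k s =
      c * (Real.exp ε * s * (Real.exp ε * t) - (k - s) * (k - t)) := by
  have ht : 0 < t := hs.trans hst
  have hks : 0 < k - s := by linarith
  have hkt : 0 < k - t := by linarith
  refine ⟨k * (t - s) / (s * t * (k - s) * (k - t)), ?_, ?_⟩
  · have : 0 < t - s := sub_pos.2 hst
    have : 0 < k := by linarith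
    positivity
  · unfold gfun
    field_simp
    ring

lemma gfun_lt_gfun_iff (hs : 0 < s) (hst : s < t) (htk : t < k) :
    gfun ε k t < gfun ε k s ↔ Real.exp ε * s * (Real.exp ε * t) < (k - s) * (k - t) := by
  obtain ⟨c, hc, hdiff⟩ := exists_pos_gfun_sub_gfun_eq (ε := ε) hs hst htk
  rw [← sub_neg, hdiff]
  exact ⟨fun h => sub_neg.1 (neg_of_mul_neg_right h hc.le),
    fun h => mul_neg_of_pos_of_neg hc (sub_neg.2 h)⟩

lemma gfun_lt_gfun_iff' (hs : 0 < s) (hst : s < t) (htk : t < k) :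
    gfun ε k s < gfun ε k t ↔ (k - s) * (k - t) < Real.exp ε * s * (Real.exp ε * t) := by
  obtain ⟨c, hc, hdiff⟩ := exists_pos_gfun_sub_gfun_eq (ε := ε) hs hst htk
  rw [← sub_pos, hdiff, mul_pos_iff_of_pos_left hc, sub_pos]

lemma le_div_exp_add_one_iff : t ≤ k / (Real.exp ε + 1) ↔ Real.exp ε * t ≤ k - t := by
  rw [le_div_iff₀ (by positivity)]
  constructor <;> intro h <;> linarith

lemma div_exp_add_one_le_iff : k / (Real.exp ε + 1) ≤ s ↔ k - s ≤ Real.exp ε * s := by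
  rw [div_le_iff₀ (by positivity)]
  constructor <;> intro h <;> linarith

lemma gfun_strictAntiOn : StrictAntiOn (gfun ε k) (Set.Ioc 0 (k / (Real.exp ε + 1))) := by
  rintro s ⟨hs, -⟩ t ⟨ht, hts⟩ hst
  have hat : Real.exp ε * t ≤ k - t := le_div_exp_add_one_iff.1 hts
  have hexp := Real.exp_pos ε
  rw [gfun_lt_gfun_iff hs hst (by nlinarith)]
  exact mul_lt_mul (by nlinarith) hat (by positivity) (by nlinarith)

lemma gfun_strictMonoOn : StrictMonoOn (gfun ε k) (Set.Ico (k / (Real.exp ε + 1)) k) := by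
  rintro s ⟨hss, hs⟩ t ⟨-, htk⟩ hst
  have has : k - s ≤ Real.exp ε * s := div_exp_add_one_le_iff.1 hss
  have hexp := Real.exp_pos ε
  have hs0 : 0 < s := by nlinarith
  rw [gfun_lt_gfun_iff' hs0 hst htk]
  exact mul_lt_mul' has (by nlinarith) (by nlinarith) (by positivity)

end

theorem statement8_general (ε k : ℝ) :
    StrictAntiOn (gfun ε k) (Set.Ioc 0 (k / (Real.exp ε + 1))) ∧
    StrictMonoOn (gfun ε k) (Set.Ico (k / (Real.exp ε + 1)) k) ∧
    ∀ s ∈ Set.Ioo 0 k, s ≠ k / (Real.exp ε + 1) →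
      gfun ε k (k / (Real.exp ε + 1)) < gfun ε k s := by
  refine ⟨gfun_strictAntiOn, gfun_strictMonoOn, fun s hs hne => ?_⟩
  have hk : 0 < k := hs.1.trans hs.2
  have hmin : k / (Real.exp ε + 1) ∈ Set.Ioo 0 k :=
    ⟨by positivity, div_lt_self hk (by linarith [Real.exp_pos ε])⟩
  rcases hne.lt_or_gt with h | h
  · exact gfun_strictAntiOn ⟨hs.1, h.le⟩ ⟨hmin.1, le_rfl⟩ h
  · exact gfun_strictMonoOn ⟨le_rfl, hmin.2⟩ ⟨h.le, hs.2⟩ h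

theorem statement8 (ε k : ℝ) (hε : 0 < ε) (hk : 0 < k) :
    StrictAntiOn (gfun ε k) (Set.Ioc 0 (k / (Real.exp ε + 1))) ∧
    StrictMonoOn (gfun ε k) (Set.Ico (k / (Real.exp ε + 1)) k) ∧
    ∀ s ∈ Set.Ioo 0 k, s ≠ k / (Real.exp ε + 1) →
      gfun ε k (k / (Real.exp ε + 1)) < gfun ε k s :=
  statement8_general ε k
end

section
/- Let X be a real random variable with probability density function φ satisfying φ(x) = φ(2μ − x) for all x ∈ ℝ, where μ = E X is finite, and let u ≥ 1 be such that E|X|^u < ∞. Then for every a ∈ ℝ, E|X − μ|^u ≤ E|X − a|^u; that is, the mean μ minimizes a ↦ E|X − a|^u. -/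
open MeasureTheory ProbabilityTheory Filter Real
open scoped ENNReal NNReal

/-! A probability density symmetric about `μ` makes the reflection `x ↦ 2μ - x` measure-preserving,
so `X` and `2μ - X` have the same law. For an even convex `g`, the identity
`x - μ = ((x - a) + (x - (2μ - a))) / 2` and convexity give
`E g(X - μ) ≤ (E g(X - a) + E g(X - (2μ - a))) / 2`, and the two terms on the right agree
by the reflection. Apply this with `g = |·|^u`, convex for `u ≥ 1`. -/

open Set

theorem MeasureTheory.MeasurePreserving.withDensity_comp {α β : Type*} [MeasurableSpace α]
    [MeasurableSpace β] {μ : Measure α} {ν : Measure β} {f : α → β}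
    (hf : MeasurePreserving f μ ν) (hfe : MeasurableEmbedding f) (φ : β → ℝ≥0∞) :
    MeasurePreserving f (μ.withDensity (φ ∘ f)) (ν.withDensity φ) := by
  refine ⟨hf.measurable, Measure.ext fun s hs => ?_⟩
  rw [Measure.map_apply hf.measurable hs, withDensity_apply _ (hf.measurable hs),
    withDensity_apply _ hs, ← hf.setLIntegral_comp_preimage_emb hfe φ s]
  rfl

theorem measurePreserving_reflect_withDensity {φ : ℝ → ℝ≥0∞} {μ : ℝ}
    (hsym : ∀ x, φ x = φ (2 * μ - x)) :
    MeasurePreserving (fun x => 2 * μ - x) (volume.withDensity φ) (volume.withDensity φ) := by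
  have h := (Measure.measurePreserving_sub_left volume (2 * μ)).withDensity_comp
    (MeasurableEquiv.subLeft (2 * μ)).measurableEmbedding φ
  rwa [show φ ∘ (fun x => 2 * μ - x) = φ from funext fun x => (hsym x).symm] at h

theorem convexOn_abs_rpow {p : ℝ} (hp : 1 ≤ p) : ConvexOn ℝ univ fun x : ℝ => |x| ^ p := by
  have himage : (fun x : ℝ => |x|) '' univ = Ici 0 := by
    ext y
    simp only [image_univ, mem_range, mem_Ici]
    exact ⟨fun ⟨x, hx⟩ => hx ▸ abs_nonneg x, fun hy => ⟨y, abs_of_nonneg hy⟩⟩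
  have habs : ConvexOn ℝ univ fun x : ℝ => |x| := convexOn_univ_norm
  refine ConvexOn.comp (g := fun x : ℝ => x ^ p) ?_ habs ?_ <;> rw [himage]
  · exact convexOn_rpow hp
  · exact fun x hx y _ hxy => Real.rpow_le_rpow hx hxy (by linarith)

theorem integrable_abs_sub_rpow {P : Measure ℝ} [IsFiniteMeasure P] {u : ℝ} (hu : 0 < u)
    (hmom : Integrable (fun x => |x| ^ u) P) (c : ℝ) :
    Integrable (fun x => |x - c| ^ u) P := by
  have hp : ENNReal.ofReal u ≠ 0 := by simpa using hu
  have hmeas (c : ℝ) : AEStronglyMeasurable (fun x : ℝ => x - c) P :=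
    (measurable_id.sub_const c).aestronglyMeasurable
  have hmemLp : MemLp (fun x : ℝ => x) (ENNReal.ofReal u) P := by
    rw [← integrable_norm_rpow_iff (hmeas 0 |>.congr (by simp)) hp ENNReal.ofReal_ne_top]
    simpa [ENNReal.toReal_ofReal hu.le] using hmom
  have h := (integrable_norm_rpow_iff (hmeas c) hp ENNReal.ofReal_ne_top).mpr
    (hmemLp.sub (memLp_const c))
  simpa [ENNReal.toReal_ofReal hu.le] using h

theorem integral_comp_sub_le_of_measurePreserving_reflect {P : Measure ℝ} {μ a : ℝ} {g : ℝ → ℝ}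
    (hconv : ConvexOn ℝ univ g) (heven : ∀ t, g (-t) = g t)
    (hrefl : MeasurePreserving (fun x => 2 * μ - x) P P)
    (hμ : Integrable (fun x => g (x - μ)) P) (ha : Integrable (fun x => g (x - a)) P) :
    ∫ x, g (x - μ) ∂P ≤ ∫ x, g (x - a) ∂P := by
  have hemb := (MeasurableEquiv.subLeft (2 * μ)).measurableEmbedding
  have hreflected (x : ℝ) : g (2 * μ - x - (2 * μ - a)) = g (x - a) := by
    rw [← heven, neg_sub, sub_sub_sub_cancel_left]
  have ha' : Integrable (fun x => g (x - (2 * μ - a))) P := by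
    rw [← hrefl.integrable_comp_emb hemb]
    simpa only [Function.comp_def, hreflected] using ha
  have hint_eq : ∫ x, g (x - (2 * μ - a)) ∂P = ∫ x, g (x - a) ∂P := by
    rw [← hrefl.integral_comp hemb]
    simp only [hreflected]
  have hmid (x : ℝ) : g (x - μ) ≤ (g (x - a) + g (x - (2 * μ - a))) / 2 := by
    have h := hconv.2 (mem_univ (x - a)) (mem_univ (x - (2 * μ - a)))
      (by norm_num : (0 : ℝ) ≤ 1 / 2) (by norm_num : (0 : ℝ) ≤ 1 / 2) (by norm_num)
    simp only [smul_eq_mul] at h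
    calc g (x - μ) = g (1 / 2 * (x - a) + 1 / 2 * (x - (2 * μ - a))) := by congr 1; ring
      _ ≤ 1 / 2 * g (x - a) + 1 / 2 * g (x - (2 * μ - a)) := h
      _ = (g (x - a) + g (x - (2 * μ - a))) / 2 := by ring
  calc ∫ x, g (x - μ) ∂P
      ≤ ∫ x, (g (x - a) + g (x - (2 * μ - a))) / 2 ∂P :=
        integral_mono hμ ((ha.add ha').div_const 2) hmid
    _ = ∫ x, g (x - a) ∂P := by
        rw [integral_div, integral_add ha ha', hint_eq]
        ring

theorem statement10_general (P : Measure ℝ) [IsProbabilityMeasure P] (φ : ℝ → ℝ≥0∞)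
    (hP : P = MeasureTheory.volume.withDensity φ)
    (μ : ℝ)
    (hsym : ∀ x, φ x = φ (2*μ - x))
    (u : ℝ) (hu : 1 ≤ u) (hmom : Integrable (fun x => |x| ^ u) P) :
    ∀ a : ℝ, ∫ x, |x - μ| ^ u ∂P ≤ ∫ x, |x - a| ^ u ∂P := by
  intro a
  have hrefl : MeasurePreserving (fun x => 2 * μ - x) P P :=
    hP ▸ measurePreserving_reflect_withDensity hsym
  have hu0 : 0 < u := by linarith
  exact integral_comp_sub_le_of_measurePreserving_reflect (convexOn_abs_rpow hu) (fun t => by rw [abs_neg]) hrefl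
    (integrable_abs_sub_rpow hu0 hmom μ) (integrable_abs_sub_rpow hu0 hmom a)

theorem statement10 (P : Measure ℝ) [IsProbabilityMeasure P] (φ : ℝ → ℝ≥0∞)
    (hP : P = MeasureTheory.volume.withDensity φ)
    (hint : Integrable (fun x => x) P)
    (μ : ℝ) (hμ : μ = ∫ x, x ∂P)
    (hsym : ∀ x, φ x = φ (2*μ - x))
    (u : ℝ) (hu : 1 ≤ u) (hmom : Integrable (fun x => |x| ^ u) P) :
    ∀ a : ℝ, ∫ x, |x - μ| ^ u ∂P ≤ ∫ x, |x - a| ^ u ∂P :=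
  statement10_general P φ hP μ hsym u hu hmom
end

section
/- Let k ≥ 2, ε > 0 and u > 0, and let Q ∈ D_{ε,E} have output alphabet {1,…,L}, so that Σ_{j=1}^L q_{jv} = 1 for every v ∈ {1,…,k}. Then, with the convention that a nonpositive quantity raised to the power −u/2 is +∞, Σ_{i=1}^k ((k^2/(k−1)^2)(Σ_{j=1}^L q_{ji}^2/q_j − 1))^{−u/2} ≥ k M(k,ε)^{u/2}. -/
open MeasureTheory ProbabilityTheory Filter Real
open scoped ENNReal NNReal

/-!
A row of a scheme in `D_{ε,E}` takes only the values `m` and `e^ε m`. If `s` of its entries equal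
`e^ε m`, Lagrange's identity gives `k Σ_v q_{jv}² - (Σ_v q_{jv})² = (e^ε - 1)² m² s (k - s)`, and the
minimality of `g(d*)` gives `m² s (k - s) g(d*) ≤ (Σ_v q_{jv})²`. Hence
`Σ_i q_{ji}² / q_j ≤ (1 + (e^ε - 1)² / g(d*)) Σ_v q_{jv}`, and summing over the rows shows that the
quantities raised to the power `-u/2` sum to at most `k / M(k, ε)`. By AM-GM, or a nonpositive term
becoming `⊤`, the sum of their `-u/2`-th powers is then at least `k M(k, ε)^{u/2}`.
-/

open Finset

section TwoValued

variable {ι : Type*} [Fintype ι] [DecidableEq ι] (S : Finset ι)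

lemma sum_ite_mem_const (x y : ℝ) :
    ∑ v, (if v ∈ S then x else y) = #S * x + (Fintype.card ι - #S) * y := by
  rw [sum_ite, sum_const, sum_const, filter_mem_eq_inter, univ_inter, filter_not,
    filter_mem_eq_inter, univ_inter, card_sdiff_of_subset (subset_univ S), card_univ,
    nsmul_eq_mul, nsmul_eq_mul, Nat.cast_sub (card_le_univ S)]

variable (m a : ℝ)

lemma sum_ite_mem_mul_left :
    ∑ v, (if v ∈ S then a * m else m) = m * ((a - 1) * #S + Fintype.card ι) := by
  rw [sum_ite_mem_const]
  ring

lemma card_mul_sum_ite_mem_sq :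
    Fintype.card ι * ∑ v, (if v ∈ S then a * m else m) ^ 2 =
      (∑ v, if v ∈ S then a * m else m) ^ 2 +
        (a - 1) ^ 2 * m ^ 2 * (#S * (Fintype.card ι - #S)) := by
  simp only [apply_ite (· ^ 2)]
  rw [sum_ite_mem_const, sum_ite_mem_const]
  ring

lemma card_mul_sum_ite_mem_sq_le {G : ℝ} (hG : 0 < G)
    (hSG : #S * (Fintype.card ι - #S) * G ≤ ((a - 1) * #S + Fintype.card ι) ^ 2) :
    Fintype.card ι * ∑ v, (if v ∈ S then a * m else m) ^ 2 ≤
      (1 + (a - 1) ^ 2 / G) * (∑ v, if v ∈ S then a * m else m) ^ 2 := by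
  rw [card_mul_sum_ite_mem_sq, sum_ite_mem_mul_left]
  have hS : #S * (Fintype.card ι - #S) ≤ ((a - 1) * #S + Fintype.card ι) ^ 2 / G :=
    (le_div_iff₀ hG).2 hSG
  have := mul_le_mul_of_nonneg_left hS (by positivity : 0 ≤ (a - 1) ^ 2 * m ^ 2)
  linear_combination this

end TwoValued

namespace IsOptDstar

variable {k dstar : ℕ} {ε : ℝ}

lemma two_le (hd : IsOptDstar k ε dstar) : 2 ≤ k := by
  have := mem_Icc.1 hd.1
  omega

lemma gfun_pos (hd : IsOptDstar k ε dstar) : 0 < gfun ε k dstar := by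
  obtain ⟨h1, h2⟩ := mem_Icc.1 hd.1
  have hd1 : (1 : ℝ) ≤ dstar := by exact_mod_cast h1
  have hdk : (dstar : ℝ) < k := by exact_mod_cast (show dstar < k by omega)
  have hkd : (0 : ℝ) < k - dstar := by linarith
  have := mul_pos (zero_lt_one.trans_le hd1) (exp_pos ε)
  exact div_pos (pow_pos (by linarith) 2) (by positivity)

lemma cast_mul_sub_mul_gfun_le (hd : IsOptDstar k ε dstar) {s : ℕ} (hs : s ≤ k) :
    s * (k - s) * gfun ε k dstar ≤ ((exp ε - 1) * s + k) ^ 2 := by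
  obtain rfl | hs0 := Nat.eq_zero_or_pos s
  · simp only [Nat.cast_zero, zero_mul]
    positivity
  obtain rfl | hsk := hs.eq_or_lt
  · simp only [sub_self, mul_zero, zero_mul]
    positivity
  have hs_pos : (0 : ℝ) < s * (k - s) := by
    have : (s : ℝ) < k := by exact_mod_cast hsk
    have : (0 : ℝ) < s := by exact_mod_cast hs0
    positivity
  have := hd.2 s (mem_Icc.2 ⟨hs0, by omega⟩)
  have hgs : gfun ε k s = (s * exp ε + k - s) ^ 2 / (s * (k - s)) := rfl
  rw [hgs, le_div_iff₀ hs_pos] at this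
  linear_combination this

lemma Mconst_pos (hd : IsOptDstar k ε dstar) (hε : 0 < ε) : 0 < Mconst k ε dstar := by
  have hk : (2 : ℝ) ≤ k := by exact_mod_cast hd.two_le
  have hk1 : (0 : ℝ) < k - 1 := by linarith
  have ha : 0 < exp ε - 1 := by linarith [add_one_lt_exp hε.ne']
  unfold Mconst
  exact mul_pos (by positivity) hd.gfun_pos

end IsOptDstar

lemma div_Mconst (k dstar : ℕ) (ε : ℝ) :
    k / Mconst k ε dstar = k ^ 2 / (k - 1) ^ 2 * ((exp ε - 1) ^ 2 / gfun ε k dstar * k) := by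
  simp only [Mconst, div_eq_mul_inv, mul_inv, inv_inv]
  ring

namespace memDEE

variable {k L dstar : ℕ} {ε : ℝ} {q : Fin L → Fin k → ℝ}

lemma exists_eq_ite [NeZero k] (hq : memDEE k L ε q) (j : Fin L) :
    ∃ m, 0 < m ∧ ∃ S : Finset (Fin k), ∀ v, q j v = if v ∈ S then exp ε * m else m := by
  set m := ⨅ v, q j v
  have hratio : ∀ v, q j v / m ∈ ({1, exp ε} : Set ℝ) := hq.2.2.2 j
  have hm0 : 0 ≤ m := le_ciInf fun v => hq.1 j v
  -- `m = 0` is excluded only through the junk value `q j 0 / 0 = 0 ∉ {1, e^ε}`.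
  have hm : m ≠ 0 := by
    intro h
    have := hratio 0
    rw [h, div_zero] at this
    rcases this with h | h
    · exact zero_ne_one h
    · exact (exp_pos ε).ne h
  refine ⟨m, hm0.lt_of_ne' hm, univ.filter fun v => q j v ≠ m, fun v => ?_⟩
  have h := hratio v
  simp only [Set.mem_insert_iff, Set.mem_singleton_iff, div_eq_iff hm] at h
  rcases h with h | h
  · simp [h]
  · by_cases hv : q j v = m <;> simp [hv, h]

lemma sum_sq_div_qrow_le [NeZero k] (hq : memDEE k L ε q) (hd : IsOptDstar k ε dstar)
    (j : Fin L) :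
    ∑ i, q j i ^ 2 / qrow q j ≤ (1 + (exp ε - 1) ^ 2 / gfun ε k dstar) * ∑ v, q j v := by
  obtain ⟨m, hm, S, hS⟩ := hq.exists_eq_ite j
  have hk : (0 : ℝ) < k := by exact_mod_cast Nat.pos_of_neZero k
  have hpos : 0 < ∑ v, q j v := by
    refine sum_pos (fun v _ => ?_) univ_nonempty
    rw [hS v]
    split_ifs <;> positivity
  have key := card_mul_sum_ite_mem_sq_le S m (exp ε) hd.gfun_pos
    (by simpa using hd.cast_mul_sub_mul_gfun_le (card_le_univ S |>.trans_eq (Fintype.card_fin k)))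
  simp only [Fintype.card_fin, ← hS] at key
  set C := 1 + (exp ε - 1) ^ 2 / gfun ε k dstar
  set T := ∑ v, q j v
  rw [← sum_div, qrow, div_le_iff₀ (mul_pos (one_div_pos.2 hk) hpos),
    show C * T * (1 / k * T) = C * T ^ 2 / k by ring, le_div_iff₀ hk]
  linarith

lemma sum_sum_sq_div_qrow_le [NeZero k] (hq : memDEE k L ε q) (hd : IsOptDstar k ε dstar) :
    ∑ i, ∑ j, q j i ^ 2 / qrow q j ≤ (1 + (exp ε - 1) ^ 2 / gfun ε k dstar) * k := by
  calc ∑ i, ∑ j, q j i ^ 2 / qrow q j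
      = ∑ j, ∑ i, q j i ^ 2 / qrow q j := sum_comm
    _ ≤ ∑ j, (1 + (exp ε - 1) ^ 2 / gfun ε k dstar) * ∑ v, q j v :=
      sum_le_sum fun j _ => hq.sum_sq_div_qrow_le hd j
    _ = (1 + (exp ε - 1) ^ 2 / gfun ε k dstar) * k := by
      rw [← mul_sum, sum_comm]
      simp [hq.2.1]

end memDEE

section PowerMean

variable {ι : Type*} [Fintype ι] [Nonempty ι] {c M : ℝ} {V : ι → ℝ}

/-- AM-GM for `V` bounds the geometric mean of `V` by `M⁻¹`; AM-GM for `V ^ (-c)` finishes. -/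
lemma card_mul_rpow_le_sum_rpow_neg (hc : 0 ≤ c) (hM : 0 < M) (hV : ∀ i, 0 < V i)
    (hsum : ∑ i, V i ≤ Fintype.card ι / M) :
    Fintype.card ι * M ^ c ≤ ∑ i, V i ^ (-c) := by
  set n : ℝ := (Fintype.card ι : ℝ)
  have hn : 0 < n := Nat.cast_pos.2 Fintype.card_pos
  have hw : ∑ _i : ι, 1 / n = 1 := by simp [n]
  have amgm (z : ι → ℝ) (hz : ∀ i, 0 ≤ z i) : ∏ i, z i ^ (1 / n) ≤ ∑ i, 1 / n * z i :=
    Real.geom_mean_le_arith_mean_weighted univ _ z (fun _ _ => by positivity) hw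
      fun i _ => hz i
  set P := ∏ i, V i ^ (1 / n)
  have hP : 0 < P := prod_pos fun i _ => rpow_pos_of_pos (hV i) _
  have hPM : P ≤ M⁻¹ := by
    refine (amgm V fun i => (hV i).le).trans ?_
    rw [← mul_sum, one_div, inv_mul_le_iff₀ hn, ← div_eq_mul_inv]
    exact hsum
  have hprod : ∏ i, (V i ^ (-c)) ^ (1 / n) = P ^ (-c) := by
    rw [← Real.finsetProd_rpow _ _ fun i _ => (rpow_pos_of_pos (hV i) _).le]
    refine prod_congr rfl fun i _ => ?_
    rw [← rpow_mul (hV i).le, ← rpow_mul (hV i).le, mul_comm]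
  calc n * M ^ c = n * M⁻¹ ^ (-c) := by rw [inv_rpow hM.le, rpow_neg hM.le, inv_inv]
    _ ≤ n * P ^ (-c) :=
      mul_le_mul_of_nonneg_left (rpow_le_rpow_of_nonpos hP hPM (neg_nonpos.2 hc)) hn.le
    _ ≤ n * ∑ i, 1 / n * V i ^ (-c) := by
      gcongr
      exact hprod ▸ amgm _ fun i => (rpow_pos_of_pos (hV i) _).le
    _ = ∑ i, V i ^ (-c) := by rw [← mul_sum]; field_simp

lemma ofReal_card_mul_rpow_le_sum_rpow_neg (hc : 0 < c) (hM : 0 < M)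
    (hsum : ∑ i, V i ≤ Fintype.card ι / M) :
    ENNReal.ofReal (Fintype.card ι * M ^ c) ≤ ∑ i, ENNReal.ofReal (V i) ^ (-c) := by
  by_cases hV : ∀ i, 0 < V i
  · simp only [ENNReal.ofReal_rpow_of_pos (hV _)]
    rw [← ENNReal.ofReal_sum_of_nonneg fun i _ => (rpow_pos_of_pos (hV i) _).le]
    exact ENNReal.ofReal_le_ofReal (card_mul_rpow_le_sum_rpow_neg hc.le hM hV hsum)
  push Not at hV
  obtain ⟨i, hi⟩ := hV
  have htop : ENNReal.ofReal (V i) ^ (-c) = ⊤ := by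
    rw [ENNReal.ofReal_of_nonpos hi, ENNReal.zero_rpow_of_neg (neg_neg_of_pos hc)]
  calc _ ≤ ⊤ := le_top
    _ = ENNReal.ofReal (V i) ^ (-c) := htop.symm
    _ ≤ _ := single_le_sum (f := fun i => ENNReal.ofReal (V i) ^ (-c)) (fun _ _ => zero_le)
      (mem_univ i)

end PowerMean

theorem statement16_general (k L : ℕ) (ε u : ℝ) (hε : 0 < ε) (hu : 0 < u)
    (q : Fin L → Fin k → ℝ) (hq : memDEE k L ε q)
    (dstar : ℕ) (hd : IsOptDstar k ε dstar) :
    ENNReal.ofReal ((k:ℝ) * Mconst k ε dstar ^ (u/2)) ≤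
      ∑ i, (ENNReal.ofReal
          ((k:ℝ)^2 / ((k:ℝ)-1)^2 * (∑ j, (q j i)^2 / qrow q j - 1))) ^ (-(u/2)) := by
  have : NeZero k := ⟨by have := hd.two_le; omega⟩
  have htrace := hq.sum_sum_sq_div_qrow_le hd
  simpa using ofReal_card_mul_rpow_le_sum_rpow_neg (ι := Fin k) (by positivity)
    (hd.Mconst_pos hε) <| calc
      ∑ i, (k : ℝ) ^ 2 / (k - 1) ^ 2 * (∑ j, q j i ^ 2 / qrow q j - 1)
          = k ^ 2 / (k - 1) ^ 2 * (∑ i, ∑ j, q j i ^ 2 / qrow q j - k) := by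
        simp [← mul_sum, sum_sub_distrib]
      _ ≤ k ^ 2 / (k - 1) ^ 2 * ((exp ε - 1) ^ 2 / gfun ε k dstar * k) := by
        gcongr
        linarith
      _ = Fintype.card (Fin k) / Mconst k ε dstar := by rw [Fintype.card_fin, div_Mconst]

theorem statement16 (k L : ℕ) (hk : 2 ≤ k) (ε u : ℝ) (hε : 0 < ε) (hu : 0 < u)
    (q : Fin L → Fin k → ℝ) (hq : memDEE k L ε q)
    (dstar : ℕ) (hd : IsOptDstar k ε dstar) :
    ENNReal.ofReal ((k:ℝ) * Mconst k ε dstar ^ (u/2)) ≤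
      ∑ i, (ENNReal.ofReal
          ((k:ℝ)^2 / ((k:ℝ)-1)^2 * (∑ j, (q j i)^2 / qrow q j - 1))) ^ (-(u/2)) :=
  statement16_general k L ε u hε hu q hq dstar hd
end
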